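/- Let R be a first-order constructor rewrite system, i.e. a set of rules f p₁ … p_{ar(f)} → r where f is a defined symbol and the p_i are patterns. Define the formal call relation: f p̄ >_call g ū if there is a rule f p̄ → r in R, g is a defined symbol, and g ū is a subterm of r with |ū| = ar(g); to each formal call associate the call matrix (a_{ij}) with a_{ij} = −1 if u_j ⊲ p_i, a_{ij} = 0 if u_j = p_i, and a_{ij} = ∞ otherwise. Let → be the rewrite relation generated by R (closure of the rules under substitutions and contexts). Define the instantiated call relation ⋗: f t̄ ⋗ g v̄ iff there exist a formal call f p̄ >_call g ū and a substitution γ such that every t_i is strongly normalizing for →, t_i →* p_iγ for every i, and v_j = u_jγ for every j. If R satisfies the size-change termination principle — i.e. in the transitive closure of the call graph built from the call matrices (multiplied with the min-⊗ product on {−1,0,∞}), every matrix labeling an edge from a node to itself has at least one −1 on its diagonal — then the relation ⋗ is well-founded. -/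

import Mathlib

/-!
Suppose `f₀ t̄₀ ⋗ f₁ t̄₁ ⋗ ⋯`. Each step comes from a formal call whose call matrix describes the
arguments: a `−1` entry says that the new argument is a strict subterm of a reduct of the old one,
a `0` entry that it is a reduct of it, and these facts compose along matrix products. Colour each
pair `m < n` by the symbol `f_m` and the product of the matrices from `m` to `n`; there are finitely
many colours, so a Ramsey argument gives a subsequence whose consecutive products all equal one
matrix `M`, which labels a loop `f → f` of the closure of the call graph. The `−1` on the diagonal
of `M`, at a fixed position `i`, yields an infinite descent of `i`-th arguments along "strict
subterm of a reduct". This is impossible from a strongly normalizing term: the relation lies in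
the transitive closure of rewriting ∪ subterm, which is well-founded there because rewriting
commutes with taking subterms.
-/

/-- Entries of a size-change matrix: −1, 0 or ∞. -/
inductive SC : Type
  | minusOne
  | zero
  | infty
  deriving DecidableEq

/-- Composition of two entries: `∞` if one of them is `∞`, else `−1` if one
of them is `−1`, else `0`. -/
def SC.comp : SC → SC → SC
  | .infty, _ => .infty
  | _, .infty => .infty
  | .minusOne, _ => .minusOne
  | _, .minusOne => .minusOne
  | _, _ => .zero

/-- Minimum of two entries for the order `−1 < 0 < ∞`. -/
def SC.min : SC → SC → SC
  | .minusOne, _ => .minusOne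
  | _, .minusOne => .minusOne
  | .zero, _ => .zero
  | _, .zero => .zero
  | _, _ => .infty

/-- Product of an `m × n` size-change matrix with an `n × p` one (matrices are
encoded as total functions `ℕ → ℕ → SC`; only the entries below the dimensions
are relevant): `(A·B)_{ik} = min_{j < n} (A_{ij} ⊗ B_{jk})`. -/
def matProd (n : ℕ) (A B : ℕ → ℕ → SC) : ℕ → ℕ → SC := fun i k =>
  ((List.range n).map fun j => (A i j).comp (B j k)).foldr SC.min SC.infty

/-- A size-change matrix `A` of dimension `m × n` abstracts the pair of tuples
`(s, t)` with respect to the relation `r`: `A_{ij} = −1` implies `r (t j) (s i)`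
(i.e. `t j ≺ s i`) and `A_{ij} = 0` implies `t j = s i`. -/
def Abstracts {T : Type*} (r : T → T → Prop) (m n : ℕ)
    (A : ℕ → ℕ → SC) (s t : ℕ → T) : Prop :=
  ∀ i < m, ∀ j < n,
    (A i j = SC.minusOne → r (t j) (s i)) ∧ (A i j = SC.zero → t j = s i)

/-- An edge of a call graph on the set of symbols `F`: a source symbol, a
target symbol, and a size-change matrix (of dimension `ar src × ar tgt`). -/
structure Edge (F : Type*) : Type _ where
  src : F
  tgt : F
  mat : ℕ → ℕ → SC

/-- The transitive closure `G⁺` of a call graph `G`: `Closure ar G f g M` holds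
iff there is a nonempty path `e₁, …, e_k` in `G` from `f` to `g` whose product
of labels `A(e₁)·…·A(e_k)` is `M`. -/
inductive Closure {F : Type*} (ar : F → ℕ) (G : Set (Edge F)) :
    F → F → (ℕ → ℕ → SC) → Prop
  | base {e : Edge F} : e ∈ G → Closure ar G e.src e.tgt e.mat
  | step {e : Edge F} {g : F} {M : ℕ → ℕ → SC} :
      e ∈ G → Closure ar G e.tgt g M →
      Closure ar G e.src g (matProd (ar e.tgt) e.mat M)

/-- First-order terms over a signature `Sig` with arity function `ar`:
a term is either a variable (from the countably infinite set `ℕ`) or a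
symbol applied to as many terms as its arity. -/
inductive Term (Sig : Type) (ar : Sig → ℕ) : Type
  | var : ℕ → Term Sig ar
  | app : (f : Sig) → (Fin (ar f) → Term Sig ar) → Term Sig ar

/-- Patterns: terms built only from variables and fully applied constructors
(`isCon c` meaning that the symbol `c` is a constructor). -/
inductive Pattern {Sig : Type} {ar : Sig → ℕ} (isCon : Sig → Prop) :
    Term Sig ar → Prop
  | var (x : ℕ) : Pattern isCon (Term.var x)
  | con (c : Sig) (hc : isCon c) (ts : Fin (ar c) → Term Sig ar) :
      (∀ i, Pattern isCon (ts i)) → Pattern isCon (Term.app c ts)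

/-- The strict constructor subterm relation `⊲`: the smallest transitive
relation such that `t_i ⊲ c t₁ … t_n` for every constructor `c`. -/
inductive CSub {Sig : Type} {ar : Sig → ℕ} (isCon : Sig → Prop) :
    Term Sig ar → Term Sig ar → Prop
  | arg (c : Sig) (hc : isCon c) (ts : Fin (ar c) → Term Sig ar) (i : Fin (ar c)) :
      CSub isCon (ts i) (Term.app c ts)
  | trans {a b c : Term Sig ar} :
      CSub isCon a b → CSub isCon b c → CSub isCon a c

/-- Application of a substitution (a map from variables to terms), extended
homomorphically to terms. -/
def subst {Sig : Type} {ar : Sig → ℕ} (γ : ℕ → Term Sig ar) :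
    Term Sig ar → Term Sig ar
  | .var x => γ x
  | .app f ts => .app f (fun i => subst γ (ts i))

/-- Direct (one-step) subterm: `t_i` is a direct subterm of `f t₁ … t_n`. -/
inductive DirectSub {Sig : Type} {ar : Sig → ℕ} : Term Sig ar → Term Sig ar → Prop
  | arg (f : Sig) (ts : Fin (ar f) → Term Sig ar) (i : Fin (ar f)) :
      DirectSub (ts i) (Term.app f ts)

/-- `SubtermOf s t`: `s` is a (not necessarily strict) subterm of `t`. -/
def SubtermOf {Sig : Type} {ar : Sig → ℕ} : Term Sig ar → Term Sig ar → Prop :=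
  Relation.ReflTransGen DirectSub

/-- The rewrite relation generated by a set `R` of rules (pairs
left-hand side / right-hand side): closure of the rules under substitutions
and under contexts. -/
inductive Rew {Sig : Type} {ar : Sig → ℕ} (R : Set (Term Sig ar × Term Sig ar)) :
    Term Sig ar → Term Sig ar → Prop
  | rule {l r : Term Sig ar} (h : (l, r) ∈ R) (γ : ℕ → Term Sig ar) :
      Rew R (subst γ l) (subst γ r)
  | ctx {t t' : Term Sig ar} (h : Rew R t t')
      (f : Sig) (ts : Fin (ar f) → Term Sig ar) (i : Fin (ar f)) :
      Rew R (Term.app f (Function.update ts i t))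
            (Term.app f (Function.update ts i t'))

/-- `A` is the call matrix of the formal call `f p̄ >call g ū`:
`A_{ij} = −1` if `u_j ⊲ p_i`, `A_{ij} = 0` if `u_j = p_i` (and `u_j` is not a
strict constructor subterm of `p_i`), and `A_{ij} = ∞` otherwise. -/
def IsCallMatrix {Sig : Type} (ar : Sig → ℕ) (isCon : Sig → Prop) (f g : Sig)
    (ps : Fin (ar f) → Term Sig ar) (us : Fin (ar g) → Term Sig ar)
    (A : ℕ → ℕ → SC) : Prop :=
  ∀ (i : Fin (ar f)) (j : Fin (ar g)),
    (CSub isCon (us j) (ps i) → A i j = SC.minusOne) ∧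
    (¬ CSub isCon (us j) (ps i) → us j = ps i → A i j = SC.zero) ∧
    (¬ CSub isCon (us j) (ps i) → us j ≠ ps i → A i j = SC.infty)

/-- The call graph of a rewrite system `R`: for every formal call
`f p̄ >call g ū` — i.e. every rule `f p̄ → r` of `R` and subterm `g ū` of `r`
with `g` a defined symbol — an edge from `f` to `g` labeled with the
corresponding call matrix. -/
def CallGraph {Sig : Type} (ar : Sig → ℕ) (isCon : Sig → Prop)
    (R : Set (Term Sig ar × Term Sig ar)) : Set (Edge Sig) :=
  { e | ∃ (ps : Fin (ar e.src) → Term Sig ar)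
          (us : Fin (ar e.tgt) → Term Sig ar) (r : Term Sig ar),
      (Term.app e.src ps, r) ∈ R ∧ ¬ isCon e.tgt ∧
      SubtermOf (Term.app e.tgt us) r ∧
      IsCallMatrix ar isCon e.src e.tgt ps us e.mat }

/-- The instantiated call relation `⋗` on pairs of a symbol `f` and a tuple of
`ar f` arguments: `f t̄ ⋗ g v̄` iff there are a formal call `f p̄ >call g ū`
(a rule `f p̄ → r` in `R` and a subterm `g ū` of `r` with `g` defined) and a
substitution `γ` such that every `t_i` is strongly normalizing for the rewrite
relation, `t_i →* p_iγ` for every `i`, and `v_j = u_jγ` for every `j`. -/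
def ICall {Sig : Type} (ar : Sig → ℕ) (isCon : Sig → Prop)
    (R : Set (Term Sig ar × Term Sig ar)) :
    ((f : Sig) × (Fin (ar f) → Term Sig ar)) →
    ((g : Sig) × (Fin (ar g) → Term Sig ar)) → Prop :=
  fun x y =>
    ∃ (ps : Fin (ar x.1) → Term Sig ar) (us : Fin (ar y.1) → Term Sig ar)
      (r : Term Sig ar) (γ : ℕ → Term Sig ar),
      (Term.app x.1 ps, r) ∈ R ∧ ¬ isCon y.1 ∧
      SubtermOf (Term.app y.1 us) r ∧
      (∀ i, Acc (fun a b => Rew R b a) (x.2 i)) ∧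
      (∀ i, Relation.ReflTransGen (Rew R) (x.2 i) (subst γ (ps i))) ∧
      (∀ j, y.2 j = subst γ (us j))

open Relation

instance : Fintype SC :=
  ⟨{.minusOne, .zero, .infty}, fun a => by cases a <;> decide⟩

theorem SC.min_eq_or (a b : SC) : SC.min a b = a ∨ SC.min a b = b := by
  cases a <;> cases b <;> decide

theorem SC.comp_eq_minusOne {a b : SC} :
    a.comp b = .minusOne ↔
      (a = .minusOne ∧ b = .minusOne) ∨ (a = .minusOne ∧ b = .zero) ∨
        (a = .zero ∧ b = .minusOne) := by
  cases a <;> cases b <;> decide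

theorem SC.comp_eq_zero {a b : SC} : a.comp b = .zero ↔ a = .zero ∧ b = .zero := by
  cases a <;> cases b <;> decide

theorem List.foldr_scMin_mem {L : List SC} (h : L.foldr SC.min .infty ≠ .infty) :
    L.foldr SC.min .infty ∈ L := by
  induction L with
  | nil => exact absurd rfl h
  | cons a L ih =>
    rw [List.foldr_cons] at h ⊢
    rcases SC.min_eq_or a (L.foldr SC.min .infty) with hmin | hmin <;> rw [hmin] at h ⊢
    · exact List.mem_cons_self
    · exact List.mem_cons_of_mem _ (ih h)

theorem exists_comp_eq_matProd {n : ℕ} {A B : ℕ → ℕ → SC} {i k : ℕ}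
    (h : matProd n A B i k ≠ .infty) :
    ∃ j < n, (A i j).comp (B j k) = matProd n A B i k := by
  obtain ⟨j, hj, hjk⟩ := List.mem_map.1 (List.foldr_scMin_mem h)
  exact ⟨j, List.mem_range.1 hj, hjk⟩

theorem Acc.or_of_commute {α : Type*} {r s : α → α → Prop}
    (comm : ∀ {t v v'}, s v t → r v' v → ∃ t', r t' t ∧ s v' t')
    (hs : WellFounded s) {t : α} (ht : Acc r t) : Acc (fun a b => r a b ∨ s a b) t := by
  suffices key : ∀ u, Acc s u →
      (∀ u', r u' u → Acc (fun a b => r a b ∨ s a b) u') → Acc (fun a b => r a b ∨ s a b) u by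
    induction ht with
    | intro t _ ih => exact key t (hs.apply t) ih
  intro u hu
  induction hu with
  | intro u _ ih =>
    intro hr
    refine ⟨u, fun v hv => hv.elim (hr v) fun hvu => ih v hvu fun v' hv' => ?_⟩
    obtain ⟨t', ht', hvt'⟩ := comm hvu hv'
    exact (hr t' ht').inv (Or.inr hvt')

theorem Relation.TransGen.exists_reflTransGen_of_commute {α : Type*} {r s : α → α → Prop}
    (comm : ∀ {t v v'}, s v t → r v v' → ∃ t', r t t' ∧ s v' t')
    {t v v' : α} (hs : TransGen s v t) (hr : ReflTransGen r v v') :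
    ∃ t', ReflTransGen r t t' ∧ TransGen s v' t' := by
  have step : ∀ {t v v'}, TransGen s v t → r v v' → ∃ t', r t t' ∧ TransGen s v' t' := by
    intro t v v' hs hr
    induction hs with
    | single hvb =>
      obtain ⟨t', ht', hvt'⟩ := comm hvb hr
      exact ⟨t', ht', .single hvt'⟩
    | tail _ hbc ih =>
      obtain ⟨b', hb', hvb'⟩ := ih
      obtain ⟨c', hc', hbc'⟩ := comm hbc hb'
      exact ⟨c', hc', hvb'.tail hbc'⟩
  induction hr with
  | refl => exact ⟨t, .refl, hs⟩
  | tail _ hbc ih =>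
    obtain ⟨t', ht', hbt'⟩ := ih
    obtain ⟨t'', ht'', hct''⟩ := step hbt' hbc
    exact ⟨t'', ht'.tail ht'', hct''⟩

theorem exists_strictMono_forall_eq_of_finite {C : Type*} {S : Set C} (hS : S.Finite)
    (χ : ℕ → ℕ → C) (hχ : ∀ m n, m < n → χ m n ∈ S) :
    ∃ g : ℕ → ℕ, StrictMono g ∧ ∃ c, ∀ k, χ (g k) (g (k + 1)) = c := by
  induction S, hS using Set.Finite.induction_on generalizing χ with
  | empty => exact absurd (hχ 0 1 Nat.one_pos) (Set.notMem_empty _)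
  | @insert c S _ _ ih =>
    obtain ⟨g, hc | hnc⟩ := exists_increasing_or_nonincreasing_subseq' (fun m n => χ m n = c) id
    · exact ⟨g, g.strictMono, c, hc⟩
    obtain ⟨h, hh, c', hc'⟩ := ih (fun m n => χ (g m) (g n)) fun m n hmn =>
      (hχ _ _ (g.strictMono hmn)).resolve_left (hnc m n hmn)
    exact ⟨g ∘ h, g.strictMono.comp hh, c', hc'⟩

section Chains

variable {F : Type*} (ar : F → ℕ)

/-- `chainProd ar f A m k` is the product `A m · A (m + 1) ⋯ A (m + k)` of `k + 1` matrices. -/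
def chainProd (f : ℕ → F) (A : ℕ → ℕ → ℕ → SC) : ℕ → ℕ → ℕ → ℕ → SC
  | m, 0 => A m
  | m, k + 1 => matProd (ar (f (m + 1))) (A m) (chainProd f A (m + 1) k)

variable {ar}

theorem closure_chainProd {G : Set (Edge F)} {f : ℕ → F} {A : ℕ → ℕ → ℕ → SC}
    (hG : ∀ n, ⟨f n, f (n + 1), A n⟩ ∈ G) {m n : ℕ} (hmn : m < n) :
    Closure ar G (f m) (f n) (chainProd ar f A m (n - m - 1)) := by
  obtain ⟨k, rfl⟩ := Nat.exists_eq_add_of_lt hmn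
  rw [show m + k + 1 - m - 1 = k by omega]
  clear hmn
  induction k generalizing m with
  | zero => exact .base (hG m)
  | succ k ih =>
    have := Closure.step (hG m) ih
    rwa [show m + 1 + k + 1 = m + (k + 1) + 1 by omega] at this

end Chains

section Terms

variable {Sig : Type} {ar : Sig → ℕ} {isCon : Sig → Prop}
  {R : Set (Term Sig ar × Term Sig ar)}

theorem wellFounded_directSub : WellFounded (@DirectSub Sig ar) := by
  refine ⟨fun t => ?_⟩
  induction t with
  | var x => exact ⟨_, fun v hv => nomatch hv⟩
  | app f ts ih => exact ⟨_, fun v hv => by cases hv with | arg _ _ i => exact ih i⟩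

theorem DirectSub.exists_rew {t v v' : Term Sig ar} (h : DirectSub v t) (hr : Rew R v v') :
    ∃ t', Rew R t t' ∧ DirectSub v' t' := by
  cases h with
  | arg f ts i =>
    refine ⟨.app f (Function.update ts i v'), ?_, ?_⟩
    · simpa only [Function.update_eq_self] using Rew.ctx hr f ts i
    · simpa only [Function.update_self] using DirectSub.arg f (Function.update ts i v') i

theorem CSub.transGen_directSub {a b : Term Sig ar} (h : CSub isCon a b) :
    TransGen DirectSub a b := by
  induction h with
  | arg c _ ts i => exact .single (.arg c ts i)
  | trans _ _ ih₁ ih₂ => exact ih₁.trans ih₂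

theorem CSub.subst (γ : ℕ → Term Sig ar) {a b : Term Sig ar} (h : CSub isCon a b) :
    CSub isCon (subst γ a) (subst γ b) := by
  induction h with
  | arg c hc ts i => exact .arg c hc (fun i => _root_.subst γ (ts i)) i
  | trans _ _ ih₁ ih₂ => exact ih₁.trans ih₂

variable (R) in
def BelowReduct (v t : Term Sig ar) : Prop :=
  ∃ w, ReflTransGen (Rew R) t w ∧ TransGen DirectSub v w

theorem BelowReduct.of_reflTransGen {t t' v : Term Sig ar}
    (ht : ReflTransGen (Rew R) t t') (hv : BelowReduct R v t') : BelowReduct R v t :=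
  let ⟨w, hw, hvw⟩ := hv
  ⟨w, ht.trans hw, hvw⟩

theorem BelowReduct.reflTransGen {t v v' : Term Sig ar}
    (hv : BelowReduct R v t) (hv' : ReflTransGen (Rew R) v v') : BelowReduct R v' t :=
  let ⟨_, hw, hvw⟩ := hv
  let ⟨w', hw', hvw'⟩ := hvw.exists_reflTransGen_of_commute DirectSub.exists_rew hv'
  ⟨w', hw.trans hw', hvw'⟩

theorem BelowReduct.trans {t u v : Term Sig ar}
    (hu : BelowReduct R u v) (hv : BelowReduct R v t) : BelowReduct R u t :=
  let ⟨_, hw, huw⟩ := hu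
  let ⟨w', hw', hww'⟩ := hv.reflTransGen hw
  ⟨w', hw', huw.trans hww'⟩

theorem Acc.belowReduct {t : Term Sig ar} (ht : Acc (fun a b => Rew R b a) t) :
    Acc (BelowReduct R) t := by
  have hstep : Acc (fun a b => Rew R b a ∨ DirectSub a b) t :=
    ht.or_of_commute (fun hs hr => hs.exists_rew hr) wellFounded_directSub
  refine Subrelation.accessible (fun {v t} ⟨w, hw, hvw⟩ => ?_) hstep.transGen
  exact (TransGen.mono (fun _ _ => Or.inr) _ _ hvw).trans_left
    (ReflTransGen.mono (fun _ _ => Or.inl) _ _ (ReflTransGen.swap _ _ hw))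

variable (R) in
/-- Unlike `Abstracts`, a `0` entry only says that `t j` is a reduct of `s i`: the arguments of
an instantiated call are matched against the patterns up to rewriting. -/
def SizeChange {m n : ℕ} (A : ℕ → ℕ → SC) (s : Fin m → Term Sig ar) (t : Fin n → Term Sig ar) :
    Prop :=
  ∀ (i : Fin m) (j : Fin n), (A i j = .minusOne → BelowReduct R (t j) (s i)) ∧
    (A i j = .zero → ReflTransGen (Rew R) (s i) (t j))

theorem SizeChange.comp {m n p : ℕ} {A B : ℕ → ℕ → SC} {s : Fin m → Term Sig ar}
    {t : Fin n → Term Sig ar} {u : Fin p → Term Sig ar}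
    (hA : SizeChange R A s t) (hB : SizeChange R B t u) :
    SizeChange R (matProd n A B) s u := by
  intro i k
  constructor
  · intro h
    obtain ⟨j, hj, hcomp⟩ := exists_comp_eq_matProd (by rw [h]; decide)
    have hAij := hA i ⟨j, hj⟩
    have hBjk := hB ⟨j, hj⟩ k
    rcases SC.comp_eq_minusOne.1 (hcomp.trans h) with ⟨ha, hb⟩ | ⟨ha, hb⟩ | ⟨ha, hb⟩
    · exact (hBjk.1 hb).trans (hAij.1 ha)
    · exact (hAij.1 ha).reflTransGen (hBjk.2 hb)
    · exact (hBjk.1 hb).of_reflTransGen (hAij.2 ha)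
  · intro h
    obtain ⟨j, hj, hcomp⟩ := exists_comp_eq_matProd (by rw [h]; decide)
    obtain ⟨ha, hb⟩ := SC.comp_eq_zero.1 (hcomp.trans h)
    exact (hA i ⟨j, hj⟩).2 ha |>.trans ((hB ⟨j, hj⟩ k).2 hb)

theorem exists_isCallMatrix (f g : Sig) (ps : Fin (ar f) → Term Sig ar)
    (us : Fin (ar g) → Term Sig ar) : ∃ A, IsCallMatrix ar isCon f g ps us A := by
  classical
  refine ⟨fun i j => if h : i < ar f ∧ j < ar g then
      if CSub isCon (us ⟨j, h.2⟩) (ps ⟨i, h.1⟩) then .minusOne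
      else if us ⟨j, h.2⟩ = ps ⟨i, h.1⟩ then .zero else .infty
    else .infty, fun i j => ?_⟩
  simp only [i.2, j.2, and_self, dite_true, Fin.eta]
  exact ⟨fun h => if_pos h, fun h he => by rw [if_neg h, if_pos he],
    fun h he => by rw [if_neg h, if_neg he]⟩

theorem IsCallMatrix.sizeChange {f g : Sig} {ps : Fin (ar f) → Term Sig ar}
    {us : Fin (ar g) → Term Sig ar} {A : ℕ → ℕ → SC} (hA : IsCallMatrix ar isCon f g ps us A)
    {γ : ℕ → Term Sig ar} {s : Fin (ar f) → Term Sig ar} {t : Fin (ar g) → Term Sig ar}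
    (hs : ∀ i, ReflTransGen (Rew R) (s i) (subst γ (ps i))) (ht : ∀ j, t j = subst γ (us j)) :
    SizeChange R A s t := by
  intro i j
  obtain ⟨hlt, heq, hne⟩ := hA i j
  by_cases hsub : CSub isCon (us j) (ps i)
  · rw [hlt hsub]
    exact ⟨fun _ => ⟨_, hs i, ht j ▸ (hsub.subst γ).transGen_directSub⟩, nofun⟩
  by_cases he : us j = ps i
  · rw [heq hsub he]
    exact ⟨nofun, fun _ => ht j ▸ he ▸ hs i⟩
  · rw [hne hsub he]
    exact ⟨nofun, nofun⟩

theorem ICall.exists_edge {x y : (f : Sig) × (Fin (ar f) → Term Sig ar)}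
    (h : ICall ar isCon R x y) :
    ∃ A, (⟨x.1, y.1, A⟩ : Edge Sig) ∈ CallGraph ar isCon R ∧ SizeChange R A x.2 y.2 := by
  obtain ⟨ps, us, r, γ, hrule, hcon, hsub, -, hred, hv⟩ := h
  obtain ⟨A, hA⟩ := exists_isCallMatrix (isCon := isCon) x.1 y.1 ps us
  exact ⟨A, ⟨ps, us, r, hrule, hcon, hsub, hA⟩, hA.sizeChange hred hv⟩

theorem sizeChange_chainProd {x : ℕ → (f : Sig) × (Fin (ar f) → Term Sig ar)} {A : ℕ → ℕ → ℕ → SC}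
    (hA : ∀ n, SizeChange R (A n) (x n).2 (x (n + 1)).2) {m n : ℕ} (hmn : m < n) :
    SizeChange R (chainProd ar (fun n => (x n).1) A m (n - m - 1)) (x m).2 (x n).2 := by
  obtain ⟨k, rfl⟩ := Nat.exists_eq_add_of_lt hmn
  rw [show m + k + 1 - m - 1 = k by omega]
  clear hmn
  induction k generalizing m with
  | zero => exact hA m
  | succ k ih =>
    have := (hA m).comp ih
    rwa [show m + 1 + k + 1 = m + (k + 1) + 1 by omega] at this

theorem exists_not_acc_of_sizeChange_chain {G : Set (Edge Sig)}
    (hsct : ∀ f M, Closure ar G f f M → ∃ i < ar f, M i i = SC.minusOne)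
    {S : Set Sig} (hS : S.Finite) {x : ℕ → (f : Sig) × (Fin (ar f) → Term Sig ar)}
    (hxS : ∀ n, (x n).1 ∈ S) {A : ℕ → ℕ → ℕ → SC}
    (hG : ∀ n, ⟨(x n).1, (x (n + 1)).1, A n⟩ ∈ G)
    (hA : ∀ n, SizeChange R (A n) (x n).2 (x (n + 1)).2) :
    ∃ n i, ¬ Acc (BelowReduct R) ((x n).2 i) := by
  obtain ⟨N, hN⟩ := (hS.image ar).bddAbove
  let P m n := chainProd ar (fun n => (x n).1) A m (n - m - 1)
  -- All arities are `≤ N`, so the `(N + 1) × (N + 1)` corner of a matrix is all that matters.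
  obtain ⟨g, hg, ⟨f, M⟩, hcol⟩ := exists_strictMono_forall_eq_of_finite
    (hS.prod (Set.finite_univ (α := Fin (N + 1) → Fin (N + 1) → SC)))
    (fun m n => ((x m).1, fun i j : Fin (N + 1) => P m n i j)) fun m _ _ => ⟨hxS m, trivial⟩
  have hf k : (x (g k)).1 = f := congrArg Prod.fst (hcol k)
  have hM k (i j : Fin (N + 1)) : P (g k) (g (k + 1)) i j = M i j :=
    congrFun (congrFun (congrArg Prod.snd (hcol k)) i) j
  obtain ⟨i, hif, hP⟩ : ∃ i < ar f, P (g 0) (g 1) i i = .minusOne := by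
    have hcl := closure_chainProd (ar := ar) hG (hg Nat.zero_lt_one)
    rw [hf 0, hf 1] at hcl
    exact hsct f _ hcl
  have hiN : i < N + 1 := Nat.lt_succ_of_le (hif.le.trans (hN ⟨f, hf 0 ▸ hxS (g 0), rfl⟩))
  have hdiag k : P (g k) (g (k + 1)) i i = .minusOne :=
    (hM k ⟨i, hiN⟩ ⟨i, hiN⟩).trans ((hM 0 ⟨i, hiN⟩ ⟨i, hiN⟩).symm.trans hP)
  have hi k : i < ar (x (g k)).1 := hf k ▸ hif
  refine ⟨g 0, ⟨i, hi 0⟩, not_acc_iff_exists_descending_chain.2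
    ⟨fun k => (x (g k)).2 ⟨i, hi k⟩, rfl, fun k => ?_⟩⟩
  exact (sizeChange_chainProd hA (hg k.lt_succ_self) ⟨i, hi k⟩ ⟨i, hi (k + 1)⟩).1 (hdiag k)

end Terms

theorem sct_implies_icall_wellFounded_general {Sig : Type} (ar : Sig → ℕ)
    (isCon : Sig → Prop) (hfin : {f : Sig | ¬ isCon f}.Finite)
    (R : Set (Term Sig ar × Term Sig ar))
    (hsct : ∀ (f : Sig) (M : ℕ → ℕ → SC),
        Closure ar (CallGraph ar isCon R) f f M → ∃ i < ar f, M i i = SC.minusOne) :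
    WellFounded (fun y x => ICall ar isCon R x y) := by
  refine wellFounded_iff_isEmpty_descending_chain.2 ⟨fun ⟨x, hx⟩ => ?_⟩
  -- `x 0` may be headed by a constructor, so the chain is taken from `x 1` on.
  have hdef n : (x (n + 1)).1 ∈ {f | ¬ isCon f} := by
    obtain ⟨-, -, -, -, -, hcon, -⟩ := hx n
    exact hcon
  choose A hAG hA using fun n => (hx (n + 1)).exists_edge
  obtain ⟨n, i, hni⟩ := exists_not_acc_of_sizeChange_chain hsct hfin hdef hAG hA
  obtain ⟨-, -, -, -, -, -, -, hsn, -⟩ := hx (n + 1)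
  exact hni (hsn i).belowReduct

/-- If a first-order constructor rewrite system `R` (finitely many defined
symbols, left-hand sides of the form `f p̄` with `f` defined and `p̄` patterns)
satisfies the size-change termination principle — every matrix labeling an
edge from a node to itself in the transitive closure of its call graph has a
`−1` on its diagonal — then the instantiated call relation `⋗` is
well-founded. -/
theorem sct_implies_icall_wellFounded {Sig : Type} (ar : Sig → ℕ)
    (isCon : Sig → Prop) (hfin : {f : Sig | ¬ isCon f}.Finite)
    (R : Set (Term Sig ar × Term Sig ar))
    (hR : ∀ l r, (l, r) ∈ R → ∃ (f : Sig) (ps : Fin (ar f) → Term Sig ar),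
        ¬ isCon f ∧ l = Term.app f ps ∧ ∀ i, Pattern isCon (ps i))
    (hsct : ∀ (f : Sig) (M : ℕ → ℕ → SC),
        Closure ar (CallGraph ar isCon R) f f M → ∃ i < ar f, M i i = SC.minusOne) :
    WellFounded (fun y x => ICall ar isCon R x y) :=
  sct_implies_icall_wellFounded_general ar isCon hfin R hsct
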